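/- Let b ∈ (0, +∞] and let (H, φ) solve the EdGB FLRW system on [0, b) with the negative-branch initial data with parameter β. Then H(t) > 1/(5t + 1/β) > 0 for all t ∈ (0, b). -/

import Mathlib

/-- The EdGB FLRW system on a set `I ⊆ ℝ`: `H` is continuously differentiable and
`φ` twice continuously differentiable on `I`, and for every `t ∈ I` the Hamiltonian
constraint `3H² − 3e^φ φ' H³ = φ'²/2` and the scalar field equation
`φ'' = −3Hφ' − 3e^φ H²(H² + H')` hold. -/
def EdGB (H φ : ℝ → ℝ) (I : Set ℝ) : Prop :=
  ContDiffOn ℝ 1 H I ∧ ContDiffOn ℝ 2 φ I ∧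
  (∀ t ∈ I, 3 * H t ^ 2 - 3 * Real.exp (φ t) * deriv φ t * H t ^ 3 = (deriv φ t) ^ 2 / 2) ∧
  (∀ t ∈ I, deriv (deriv φ) t =
      -3 * H t * deriv φ t - 3 * Real.exp (φ t) * H t ^ 2 * (H t ^ 2 + deriv H t))

/-- The negative-branch initial data with parameter `β`:
`H(0) = β`, `φ(0) = 0`, `φ'(0) = −3β³ − √(9β⁶ + 6β²)`, with `0 < β < √6/6`. -/
def NegBranchData (H φ : ℝ → ℝ) (β : ℝ) : Prop :=
  0 < β ∧ β < Real.sqrt 6 / 6 ∧ H 0 = β ∧ φ 0 = 0 ∧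
  deriv φ 0 = -3 * β ^ 3 - Real.sqrt (9 * β ^ 6 + 6 * β ^ 2)


/-! Write `E = e^φ` and `p = φ'`. Differentiating the Hamiltonian constraint and eliminating `φ''`
with the scalar field equation gives
`(H' + 5H²)(3E²H⁴ - 2EHp + 2) = 4H² + 6EH⁴ + 12E²H⁶ - 8EH³p - 6E²H⁵p`,
so `H' > -5H²` wherever `H > 0` and `p < 0`. While `H > 0` the constraint forbids `p = 0`, so `p`
keeps the negative sign of `p(0)`, and then `t ↦ 5t - 1/H(t)` is increasing: `1/H(t) < 5t + 1/β`.
This bound keeps `H` away from `0` on every compact `[0, c]`, so `H` never reaches a first zero. -/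

open Set Filter Topology

lemma EdGB.mono {H φ : ℝ → ℝ} {I J : Set ℝ} (h : EdGB H φ I) (hJI : J ⊆ I) : EdGB H φ J :=
  ⟨h.1.mono hJI, h.2.1.mono hJI, fun t ht => h.2.2.1 t (hJI ht), fun t ht => h.2.2.2 t (hJI ht)⟩

lemma neg_five_mul_sq_lt_of_constraint {E h p h' p' : ℝ} (hE : 0 < E) (hh : 0 < h) (hp : p < 0)
    (hcon : 3 * h ^ 2 - 3 * E * p * h ^ 3 = p ^ 2 / 2)
    (hscal : p' = -3 * h * p - 3 * E * h ^ 2 * (h ^ 2 + h'))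
    (hdcon : 6 * h * h' - 3 * (E * p ^ 2 * h ^ 3 + E * p' * h ^ 3 + 3 * E * p * h ^ 2 * h')
      = p * p') :
    -5 * h ^ 2 < h' := by
  have hD : 0 < 3 * E ^ 2 * h ^ 4 - 2 * E * h * p + 2 := by
    nlinarith [mul_pos (mul_pos hE hh) (neg_pos.mpr hp), sq_nonneg (E * h ^ 2)]
  have key : (h' + 5 * h ^ 2) * (3 * E ^ 2 * h ^ 4 - 2 * E * h * p + 2)
      = 4 * h ^ 2 + 6 * E * h ^ 4 + 12 * E ^ 2 * h ^ 6 - 8 * E * h ^ 3 * p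
        - 6 * E ^ 2 * h ^ 5 * p := by
    subst hscal
    refine mul_left_cancel₀ (by positivity : 3 * h ≠ 0) ?_
    linear_combination hdcon - (6 * E * h ^ 3 - 6 * h) * hcon
  have hrhs : 0 < (h' + 5 * h ^ 2) * (3 * E ^ 2 * h ^ 4 - 2 * E * h * p + 2) := by
    rw [key]
    nlinarith [mul_pos (mul_pos hE (pow_pos hh 3)) (neg_pos.mpr hp),
      mul_pos (mul_pos (pow_pos hE 2) (pow_pos hh 5)) (neg_pos.mpr hp),
      mul_pos hE (pow_pos hh 4), pow_pos hh 2, pow_pos (mul_pos hE (pow_pos hh 3)) 2]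
  linarith [pos_of_mul_pos_left hrhs hD.le]

lemma EdGB.neg_five_mul_sq_lt_deriv {H φ : ℝ → ℝ} {I : Set ℝ} {t : ℝ} (hsys : EdGB H φ I)
    (hI : I ∈ 𝓝 t) (hH : 0 < H t) (hφ' : deriv φ t < 0) : -5 * H t ^ 2 < deriv H t := by
  obtain ⟨hHC, hφC, hcon, hscal⟩ := hsys
  have dH : HasDerivAt H (deriv H t) t :=
    ((hHC.contDiffAt hI).differentiableAt one_ne_zero).hasDerivAt
  have dφ : HasDerivAt φ (deriv φ t) t :=
    ((hφC.contDiffAt hI).differentiableAt two_ne_zero).hasDerivAt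
  have dφ' : HasDerivAt (deriv φ) (deriv (deriv φ) t) t :=
    (((hφC.contDiffAt hI).derivWithin (m := 1) le_rfl).differentiableAt one_ne_zero).hasDerivAt
  have hF := (((dH.pow 2).const_mul 3).sub (((dφ.exp.mul dφ').mul (dH.pow 3)).const_mul 3)).sub
    ((dφ'.pow 2).div_const 2)
  have hF0 : HasDerivAt (fun s => 3 * H s ^ 2 - 3 * (Real.exp (φ s) * deriv φ s * H s ^ 3)
      - deriv φ s ^ 2 / 2) 0 t := by
    refine (hasDerivAt_const t (0 : ℝ)).congr_of_eventuallyEq ?_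
    filter_upwards [hI] with s hs
    linear_combination hcon s hs
  refine neg_five_mul_sq_lt_of_constraint (Real.exp_pos _) hH hφ' (hcon t (mem_of_mem_nhds hI))
    (hscal t (mem_of_mem_nhds hI)) ?_
  have hdcon := hF.unique hF0
  simp only [Pi.mul_apply, Pi.pow_apply] at hdcon
  linear_combination hdcon

lemma IsPreconnected.neg_of_ne_zero {X : Type*} [TopologicalSpace X] {s : Set X} {f : X → ℝ}
    (hs : IsPreconnected s) (hf : ContinuousOn f s) (hne : ∀ x ∈ s, f x ≠ 0) {a : X} (ha : a ∈ s)
    (hfa : f a < 0) : ∀ x ∈ s, f x < 0 := by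
  intro x hx
  by_contra! h
  obtain ⟨y, hy, hy0⟩ := hs.intermediate_value ha hx hf ⟨hfa.le, h⟩
  exact hne y hy hy0

lemma ContDiffOn.continuousOn_deriv_of_differentiableAt {f : ℝ → ℝ} {s : Set ℝ} {n : WithTop ℕ∞}
    (hf : ContDiffOn ℝ n f s) (hn : 1 ≤ n) (hs : UniqueDiffOn ℝ s)
    (hd : ∀ x ∈ s, DifferentiableAt ℝ f x) : ContinuousOn (deriv f) s :=
  (hf.continuousOn_derivWithin hs hn).congr fun x hx => ((hd x hx).derivWithin (hs x hx)).symm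

lemma ContinuousOn.pos_of_forall_Ico_pos {f : ℝ → ℝ} {a b : ℝ} (hf : ContinuousOn f (Icc a b))
    (ha : 0 < f a) (hstep : ∀ c ∈ Ioc a b, (∀ u ∈ Ico a c, 0 < f u) → 0 < f c) :
    ∀ x ∈ Icc a b, 0 < f x := by
  by_contra! hZ
  set Z := Icc a b ∩ f ⁻¹' Iic 0
  have hZc : IsClosed Z := hf.preimage_isClosed_of_isClosed isClosed_Icc isClosed_Iic
  have hcZ : sInf Z ∈ Z := hZc.csInf_mem hZ ⟨a, fun x hx => hx.1.1⟩
  have hca : sInf Z ≠ a := fun h => (h ▸ hcZ.2 : f a ≤ 0).not_gt ha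
  refine (hstep (sInf Z) ⟨lt_of_le_of_ne hcZ.1.1 hca.symm, hcZ.1.2⟩ fun u hu => ?_).not_ge hcZ.2
  by_contra! hfu
  exact hu.2.not_ge (csInf_le ⟨a, fun x hx => hx.1.1⟩ ⟨⟨hu.1, hu.2.le.trans hcZ.1.2⟩, hfu⟩)

lemma inv_lt_inv_add_mul_of_neg_mul_sq_lt_deriv {f : ℝ → ℝ} {a b c : ℝ} (hab : a < b)
    (hf : ContinuousOn f (Icc a b)) (hpos : ∀ x ∈ Icc a b, 0 < f x)
    (hdiff : ∀ x ∈ Ioo a b, DifferentiableAt ℝ f x)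
    (hderiv : ∀ x ∈ Ioo a b, -c * f x ^ 2 < deriv f x) :
    (f b)⁻¹ < (f a)⁻¹ + c * (b - a) := by
  have hmono : StrictMonoOn (fun x => c * x - (f x)⁻¹) (Icc a b) := by
    refine strictMonoOn_of_hasDerivWithinAt_pos (convex_Icc a b)
      ((continuousOn_const.mul continuousOn_id).sub (hf.inv₀ fun x hx => (hpos x hx).ne'))
      (f' := fun x => c + deriv f x / f x ^ 2) (fun x hx => ?_) fun x hx => ?_
      <;> rw [interior_Icc] at hx
    · have hfx := (hpos x (Ioo_subset_Icc_self hx)).ne'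
      exact ((((hasDerivAt_id' x).const_mul c).sub ((hdiff x hx).hasDerivAt.inv hfx)).congr_deriv
        (by ring)).hasDerivWithinAt
    · have := (lt_div_iff₀ (pow_pos (hpos x (Ioo_subset_Icc_self hx)) 2)).mpr (hderiv x hx)
      linarith
  linarith [hmono (left_mem_Icc.mpr hab.le) (right_mem_Icc.mpr hab.le) hab]

lemma NegBranchData.deriv_phi_zero_neg {H φ : ℝ → ℝ} {β : ℝ} (hdata : NegBranchData H φ β) :
    deriv φ 0 < 0 := by
  obtain ⟨hβ, -, -, -, hφ'0⟩ := hdata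
  rw [hφ'0]
  nlinarith [Real.sqrt_nonneg (9 * β ^ 6 + 6 * β ^ 2), pow_pos hβ 3]

namespace EdGB

variable {r β : ℝ} {H φ : ℝ → ℝ}

lemma deriv_phi_neg (hsys : EdGB H φ (Ico 0 r)) (hdata : NegBranchData H φ β) {s : ℝ}
    (hsr : s < r) (hpos : ∀ u ∈ Icc 0 s, 0 < H u) : ∀ u ∈ Icc 0 s, deriv φ u < 0 := by
  have hsub : Icc 0 s ⊆ Ico 0 r := Icc_subset_Ico_right hsr
  -- `deriv φ 0 ≠ 0` forces `φ` to be differentiable at the endpoint `0`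
  have hdiff : ∀ x ∈ Ico 0 r, DifferentiableAt ℝ φ x := by
    rintro x ⟨hx0, hxr⟩
    rcases hx0.eq_or_lt with rfl | hx0
    · exact differentiableAt_of_deriv_ne_zero hdata.deriv_phi_zero_neg.ne
    · exact (hsys.2.1.contDiffAt (Ico_mem_nhds hx0 hxr)).differentiableAt two_ne_zero
  have hcont : ContinuousOn (deriv φ) (Icc 0 s) :=
    (hsys.2.1.continuousOn_deriv_of_differentiableAt one_le_two (uniqueDiffOn_Ico 0 r)
      hdiff).mono hsub
  intro u hu
  refine isPreconnected_Icc.neg_of_ne_zero hcont (fun v hv hφ'v => ?_)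
    (left_mem_Icc.mpr (hu.1.trans hu.2)) hdata.deriv_phi_zero_neg u hu
  have hconv := hsys.2.2.1 v (hsub hv)
  rw [hφ'v] at hconv
  nlinarith [hpos v hv]

lemma one_div_lt_of_pos (hsys : EdGB H φ (Ico 0 r)) (hdata : NegBranchData H φ β) {t : ℝ}
    (ht : 0 < t) (htr : t < r) (hpos : ∀ u ∈ Icc 0 t, 0 < H u) : 1 / (5 * t + 1 / β) < H t := by
  have hφ' := hsys.deriv_phi_neg hdata htr hpos
  have hnhds : ∀ x ∈ Ioo 0 t, Ico 0 r ∈ 𝓝 x := fun x hx => Ico_mem_nhds hx.1 (hx.2.trans htr)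
  have hcomp := inv_lt_inv_add_mul_of_neg_mul_sq_lt_deriv (c := 5) ht
    (hsys.1.continuousOn.mono (Icc_subset_Ico_right htr)) hpos
    (fun x hx => (hsys.1.contDiffAt (hnhds x hx)).differentiableAt one_ne_zero)
    (fun x hx => hsys.neg_five_mul_sq_lt_deriv (hnhds x hx) (hpos x (Ioo_subset_Icc_self hx))
      (hφ' x (Ioo_subset_Icc_self hx)))
  rw [hdata.2.2.1] at hcomp
  have hβ := hdata.1
  rw [one_div_lt (by positivity) (hpos t (right_mem_Icc.mpr ht.le))]
  simp only [one_div]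
  linarith

lemma pos_of_negBranchData (hsys : EdGB H φ (Ico 0 r)) (hdata : NegBranchData H φ β) {s : ℝ}
    (hsr : s < r) : ∀ u ∈ Icc 0 s, 0 < H u := by
  have hβ := hdata.1
  refine (hsys.1.continuousOn.mono (Icc_subset_Ico_right hsr)).pos_of_forall_Ico_pos
    (hdata.2.2.1 ▸ hβ) fun c hc hpos => ?_
  have hcr : c < r := hc.2.trans_lt hsr
  set m := 1 / (5 * c + 1 / β)
  have hbound : Ioo 0 c ⊆ Icc 0 c ∩ H ⁻¹' Ici m := fun u hu =>
    ⟨Ioo_subset_Icc_self hu,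
      ((one_div_lt_one_div_of_lt (by have := hu.1; positivity) (by linarith [hu.2])).trans
        (hsys.one_div_lt_of_pos hdata hu.1 (hu.2.trans hcr)
          fun v hv => hpos v ⟨hv.1, hv.2.trans_lt hu.2⟩)).le⟩
  have hclosed : IsClosed (Icc 0 c ∩ H ⁻¹' Ici m) :=
    (hsys.1.continuousOn.mono (Icc_subset_Ico_right hcr)).preimage_isClosed_of_isClosed
      isClosed_Icc isClosed_Ici
  have hc_mem := closure_minimal hbound hclosed
    (by rw [closure_Ioo hc.1.ne]; exact right_mem_Icc.mpr hc.1.le)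
  exact lt_of_lt_of_le (by have := hc.1; positivity) hc_mem.2

end EdGB

theorem stmt_7 (b : EReal) (β : ℝ) (H φ : ℝ → ℝ)
    (hsys : EdGB H φ {t : ℝ | 0 ≤ t ∧ (t : EReal) < b})
    (hdata : NegBranchData H φ β) :
    ∀ t : ℝ, 0 < t → (t : EReal) < b →
      H t > 1 / (5 * t + 1 / β) ∧ 1 / (5 * t + 1 / β) > 0 := by
  intro t ht htb
  obtain ⟨r, htr, hrb⟩ := EReal.lt_iff_exists_real_btwn.mp htb
  have htr : t < r := EReal.coe_lt_coe_iff.mp htr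
  have hsys' : EdGB H φ (Ico 0 r) :=
    hsys.mono fun s hs => ⟨hs.1, (EReal.coe_lt_coe_iff.mpr hs.2).trans hrb⟩
  have hβ := hdata.1
  exact ⟨hsys'.one_div_lt_of_pos hdata ht htr (hsys'.pos_of_negBranchData hdata htr),
    by positivity⟩
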